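/- Let E_1 and E_2 be two (d−m)-dimensional linear subspaces of R^d making an angle φ < π/2, and let n be a unit vector in R^d with projections u_1 into E_1 and u_2 into E_2. Let {v_1,…,v_{d−m}} and {w_1,…,w_{d−m}} be orthonormal bases of E_1 and E_2 satisfying: v_i = w_i for i ≤ d−2m (when d−2m ≥ 1), ∠(v_i,w_i) ≤ φ for all i, and ∠(v_i, w_j − v_j) ∈ [(π−φ)/2, (π+φ)/2] for all i,j. Set α_1 = Σ_{i=1}^{d−m} (nᵗv_i)² and α_2 = Σ_{i=d−2m+1}^{d−m} ((w_i − v_i)ᵗ n)². If α_1 > α_2 + 2m²φ²/cos φ, then (u_1ᵗ u_2)/(‖u_1‖‖u_2‖) ≥ √(1 − α_2/α_1)·cos φ − 2m²φ²/√(α_1² − α_1 α_2). -/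

import Mathlib

open Set Real

/-- The angle between two subspaces of `ℝ^d` (largest principal angle). -/
noncomputable def subAngle {d : ℕ} (V W : Submodule ℝ (EuclideanSpace ℝ (Fin d))) : ℝ :=
  sSup {θ | ∃ v ∈ V, ‖v‖ = 1 ∧
    θ = InnerProductGeometry.angle v
      ((W.orthogonalProjectionOnto v : W) : EuclideanSpace ℝ (Fin d))}

lemma aux_scalar (t q c : ℝ) (hq : 0 ≤ q) (hc0 : 0 < c) (hc1 : c ≤ 1)
    (ht : 2 * q / c < t) : t * c - 2 * q ≤ Real.sqrt (t * (t - q)) := by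
  have ht0 : 0 < t := lt_of_le_of_lt (by positivity) ht
  have htc : 2 * q ≤ t * c := by
    rw [div_lt_iff₀ hc0] at ht; linarith
  have hkey : (t * c - 2 * q) ^ 2 ≤ t * (t - q) := by
    have h1 : 2 * q * (1 - c ^ 2) ≤ t * c * (1 - c ^ 2) := by
      apply mul_le_mul_of_nonneg_right htc; nlinarith
    have hA : 0 ≤ q * c * (t * c - 2 * q) :=
      mul_nonneg (mul_nonneg hq hc0.le) (by linarith)
    have hB : t * (2 * q * (1 - c ^ 2)) ≤ t * (t * c * (1 - c ^ 2)) :=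
      mul_le_mul_of_nonneg_left h1 ht0.le
    have hC : 0 ≤ q * t * (2 - c) := by
      apply mul_nonneg (mul_nonneg hq ht0.le); linarith
    nlinarith [hA, hB, hC, hc0, mul_pos ht0 hc0]
  rcases le_or_gt (t * c - 2 * q) 0 with h | h
  · exact h.trans (Real.sqrt_nonneg _)
  · exact (Real.le_sqrt h.le (by nlinarith)).2 hkey

-- projection onto span of orthonormal family

lemma aux_proj {d N : ℕ} (E : Submodule ℝ (EuclideanSpace ℝ (Fin d)))
    (v : Fin N → EuclideanSpace ℝ (Fin d)) (hv : Orthonormal ℝ v)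
    (hE : Submodule.span ℝ (Set.range v) = E) (n : EuclideanSpace ℝ (Fin d)) :
    ((E.orthogonalProjectionOnto n : E) : EuclideanSpace ℝ (Fin d)) =
      ∑ i, (inner ℝ n (v i) : ℝ) • v i := by
  rw [← Submodule.starProjection_apply]; apply Submodule.eq_starProjection_of_mem_of_inner_eq_zero
  · rw [← hE]
    exact Submodule.sum_mem _ fun i _ =>
      Submodule.smul_mem _ _ (Submodule.subset_span (Set.mem_range_self i))
  · intro z hz
    rw [← hE] at hz
    induction hz using Submodule.span_induction with
    | mem x hx =>
      obtain ⟨j, rfl⟩ := hx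
      rw [inner_sub_left]
      have : (inner ℝ (∑ i, (inner ℝ n (v i) : ℝ) • v i) (v j) : ℝ) = inner ℝ n (v j) := by
        simpa using hv.inner_left_fintype (fun i => (inner ℝ n (v i) : ℝ)) j
      rw [this, real_inner_comm]
      ring
    | zero => simp
    | add x y _ _ hx hy => rw [inner_add_right, hx, hy]; ring
    | smul a x _ hx => rw [inner_smul_right, hx]; simp

lemma aux_M {d : ℕ} (φ : ℝ) (hφ0 : 0 ≤ φ) (hφπ : φ ≤ π)
    (x y z : EuclideanSpace ℝ (Fin d)) (hx : ‖x‖ = 1) (hy : ‖y‖ = 1) (hz : ‖z‖ = 1)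
    (hangle : InnerProductGeometry.angle y z ≤ φ)
    (hangle2 : InnerProductGeometry.angle x (z - y) ∈ Set.Icc ((π - φ) / 2) ((π + φ) / 2)) :
    |(inner ℝ x (z - y) : ℝ)| ≤ φ ^ 2 / 2 := by
  have hθ0 := InnerProductGeometry.angle_nonneg y z
  have hinner : (inner ℝ y z : ℝ) = Real.cos (InnerProductGeometry.angle y z) := by
    have := InnerProductGeometry.cos_angle_mul_norm_mul_norm y z
    rw [hy, hz] at this; simpa using this.symm
  have hcosθ : 1 - φ ^ 2 / 2 ≤ (inner ℝ y z : ℝ) := by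
    rw [hinner]
    calc 1 - φ ^ 2 / 2 ≤ 1 - (InnerProductGeometry.angle y z) ^ 2 / 2 := by nlinarith
      _ ≤ _ := Real.one_sub_sq_div_two_le_cos
  have hnormsq : ‖z - y‖ ^ 2 ≤ φ ^ 2 := by
    have := norm_sub_sq_real z y
    rw [hy, hz, real_inner_comm] at this
    nlinarith
  have hnorm : ‖z - y‖ ≤ φ := by nlinarith [norm_nonneg (z - y)]
  obtain ⟨hlo, hhi⟩ := hangle2
  have hψπ := InnerProductGeometry.angle_le_pi x (z - y)
  have hψ0 := InnerProductGeometry.angle_nonneg x (z - y)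
  have hsin : Real.sin (φ / 2) ≤ φ / 2 := Real.sin_le (by positivity)
  have hub : Real.cos (InnerProductGeometry.angle x (z - y)) ≤ φ / 2 := by
    have h1 : Real.cos (InnerProductGeometry.angle x (z - y)) ≤ Real.cos ((π - φ) / 2) :=
      Real.cos_le_cos_of_nonneg_of_le_pi (by linarith) hψπ hlo
    have h2 : Real.cos ((π - φ) / 2) = Real.sin (φ / 2) := by
      rw [show (π - φ) / 2 = π / 2 - φ / 2 by ring, Real.cos_pi_div_two_sub]
    linarith [h1, h2 ▸ h1]
  have hlb : -(φ / 2) ≤ Real.cos (InnerProductGeometry.angle x (z - y)) := by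
    have h1 : Real.cos ((π + φ) / 2) ≤ Real.cos (InnerProductGeometry.angle x (z - y)) :=
      Real.cos_le_cos_of_nonneg_of_le_pi hψ0 (by linarith) hhi
    have h2 : Real.cos ((π + φ) / 2) = -Real.sin (φ / 2) := by
      rw [show (π + φ) / 2 = π / 2 - -(φ / 2) by ring, Real.cos_pi_div_two_sub, Real.sin_neg]
    linarith [h2 ▸ h1]
  have hinner2 : (inner ℝ x (z - y) : ℝ) =
      Real.cos (InnerProductGeometry.angle x (z - y)) * ‖z - y‖ := by
    have := InnerProductGeometry.cos_angle_mul_norm_mul_norm x (z - y)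
    rw [hx] at this; simpa using this.symm
  rw [hinner2, abs_mul, abs_norm]
  calc |Real.cos (InnerProductGeometry.angle x (z - y))| * ‖z - y‖
      ≤ (φ / 2) * φ := by
        apply mul_le_mul _ hnorm (norm_nonneg _) (by positivity)
        rw [abs_le]; exact ⟨hlb, hub⟩
    _ = φ ^ 2 / 2 := by ring

lemma aux_main (α₁ α₂ sAC R cφ q nS nT N : ℝ)
    (hq : 0 ≤ q) (hc0 : 0 < cφ) (hc1 : cφ ≤ 1) (hα₂0 : 0 ≤ α₂)
    (hcond : α₂ + 2 * q / cφ < α₁)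
    (hN : N = α₁ + sAC + R) (hR : |R| ≤ q / 2)
    (hnT : nT ^ 2 = α₁ + 2 * sAC + α₂) (hTpos : 0 < nT)
    (hnS : nS = Real.sqrt α₁) :
    Real.sqrt (1 - α₂ / α₁) * cφ - 2 * q / Real.sqrt (α₁ ^ 2 - α₁ * α₂) ≤ N / (nS * nT) := by
  have hqc : 0 ≤ 2 * q / cφ := by positivity
  have hα₁pos : 0 < α₁ := by linarith
  have ht : 2 * q / cφ < α₁ - α₂ := by linarith
  have htpos : 0 < α₁ - α₂ := lt_of_le_of_lt hqc ht
  have h2q : 2 * q ≤ (α₁ - α₂) * cφ := by rw [div_lt_iff₀ hc0] at ht; linarith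
  have htq : q ≤ α₁ - α₂ := by nlinarith
  have hsqrtq : Real.sqrt (α₁ - α₂ - q) ^ 2 = α₁ - α₂ - q := Real.sq_sqrt (by linarith)
  have hNlow : nT * Real.sqrt (α₁ - α₂ - q) ≤ N := by
    nlinarith [sq_nonneg (nT - Real.sqrt (α₁ - α₂ - q)), (abs_le.1 hR).1]
  have hsApos : 0 < Real.sqrt α₁ := Real.sqrt_pos.2 hα₁pos
  have step1 : Real.sqrt (α₁ - α₂ - q) / Real.sqrt α₁ ≤ N / (nS * nT) := by
    rw [hnS, div_le_div_iff₀ hsApos (by positivity)]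
    calc Real.sqrt (α₁ - α₂ - q) * (Real.sqrt α₁ * nT)
        = (nT * Real.sqrt (α₁ - α₂ - q)) * Real.sqrt α₁ := by ring
      _ ≤ N * Real.sqrt α₁ := mul_le_mul_of_nonneg_right hNlow hsApos.le
  have hu : 0 < Real.sqrt (α₁ - α₂) := Real.sqrt_pos.2 htpos
  have key : Real.sqrt (α₁ - α₂) * cφ - 2 * q / Real.sqrt (α₁ - α₂)
      ≤ Real.sqrt (α₁ - α₂ - q) := by
    have h := aux_scalar (α₁ - α₂) q cφ hq hc0 hc1 ht
    rw [Real.sqrt_mul htpos.le] at h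
    apply le_of_mul_le_mul_left _ hu
    have e : Real.sqrt (α₁ - α₂) * (Real.sqrt (α₁ - α₂) * cφ - 2 * q / Real.sqrt (α₁ - α₂))
        = (α₁ - α₂) * cφ - 2 * q := by
      rw [mul_sub, ← mul_assoc, Real.mul_self_sqrt htpos.le, mul_comm _ (2 * q / _),
        div_mul_cancel₀ _ hu.ne']
    rw [e]
    exact h
  have e1 : (1 - α₂ / α₁) = (α₁ - α₂) / α₁ := by field_simp
  have e2 : Real.sqrt ((α₁ - α₂) / α₁) = Real.sqrt (α₁ - α₂) / Real.sqrt α₁ :=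
    Real.sqrt_div htpos.le α₁
  have e3 : Real.sqrt (α₁ ^ 2 - α₁ * α₂) = Real.sqrt α₁ * Real.sqrt (α₁ - α₂) := by
    rw [show α₁ ^ 2 - α₁ * α₂ = α₁ * (α₁ - α₂) by ring, Real.sqrt_mul hα₁pos.le]
  calc Real.sqrt (1 - α₂ / α₁) * cφ - 2 * q / Real.sqrt (α₁ ^ 2 - α₁ * α₂)
      = Real.sqrt (α₁ - α₂) / Real.sqrt α₁ * cφ
        - 2 * q / (Real.sqrt α₁ * Real.sqrt (α₁ - α₂)) := by rw [e1, e2, e3]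
    _ = (Real.sqrt (α₁ - α₂) * cφ - 2 * q / Real.sqrt (α₁ - α₂)) / Real.sqrt α₁ := by
        field_simp
    _ ≤ Real.sqrt (α₁ - α₂ - q) / Real.sqrt α₁ := (div_le_div_iff_of_pos_right hsApos).2 key
    _ ≤ N / (nS * nT) := step1

set_option maxHeartbeats 2000000 in
/-- projection comparison lemma.  With `E₁, E₂` two `(d−m)`-dimensional
subspaces making angle `φ < π/2`, `n` a unit vector with projections `u₁, u₂` into `E₁`
and `E₂`, orthonormal bases `v, w` of `E₁, E₂` satisfying the compatibility conditions,
`α₁ = Σᵢ (nᵗvᵢ)²`, `α₂ = Σ_{i ≥ d−2m} ((wᵢ−vᵢ)ᵗn)²` (0-based indices):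
if `α₁ > α₂ + 2m²φ²/cos φ` then
`u₁ᵗu₂/(‖u₁‖‖u₂‖) ≥ √(1 − α₂/α₁)·cos φ − 2m²φ²/√(α₁² − α₁α₂)`. -/
theorem stmt8 (d m : ℕ) (E₁ E₂ : Submodule ℝ (EuclideanSpace ℝ (Fin d)))
    (h1 : Module.finrank ℝ E₁ = d - m) (h2 : Module.finrank ℝ E₂ = d - m)
    (φ : ℝ) (hφdef : φ = subAngle E₁ E₂) (hφlt : φ < π / 2)
    (n : EuclideanSpace ℝ (Fin d)) (hn : ‖n‖ = 1)
    (v w : Fin (d - m) → EuclideanSpace ℝ (Fin d))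
    (hvon : Orthonormal ℝ v) (hwon : Orthonormal ℝ w)
    (hvE : Submodule.span ℝ (Set.range v) = E₁)
    (hwE : Submodule.span ℝ (Set.range w) = E₂)
    (hvw : ∀ i : Fin (d - m), (i : ℕ) < d - 2 * m → v i = w i)
    (hang : ∀ i, InnerProductGeometry.angle (v i) (w i) ≤ φ)
    (hang2 : ∀ i j, InnerProductGeometry.angle (v i) (w j - v j) ∈
      Set.Icc ((π - φ) / 2) ((π + φ) / 2))
    (α₁ α₂ : ℝ)
    (hα₁ : α₁ = ∑ i, (inner ℝ n (v i) : ℝ) ^ 2)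
    (hα₂ : α₂ = ∑ i ∈ Finset.univ.filter (fun i : Fin (d - m) => d - 2 * m ≤ (i : ℕ)),
      (inner ℝ (w i - v i) n : ℝ) ^ 2)
    (hcond : α₂ + 2 * (m : ℝ) ^ 2 * φ ^ 2 / Real.cos φ < α₁) :
    Real.sqrt (1 - α₂ / α₁) * Real.cos φ -
        2 * (m : ℝ) ^ 2 * φ ^ 2 / Real.sqrt (α₁ ^ 2 - α₁ * α₂) ≤
      (inner ℝ ((E₁.orthogonalProjectionOnto n : E₁) : EuclideanSpace ℝ (Fin d))
          ((E₂.orthogonalProjectionOnto n : E₂) : EuclideanSpace ℝ (Fin d)) : ℝ) /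
        (‖((E₁.orthogonalProjectionOnto n : E₁) : EuclideanSpace ℝ (Fin d))‖ *
         ‖((E₂.orthogonalProjectionOnto n : E₂) : EuclideanSpace ℝ (Fin d))‖) := by
  classical
  -- basic facts about φ
  have hφ0 : 0 ≤ φ := by
    rw [hφdef]
    apply Real.sSup_nonneg
    rintro x ⟨v0, -, -, rfl⟩
    exact InnerProductGeometry.angle_nonneg _ _
  have hφπ : φ ≤ π := le_trans hφlt.le (by linarith [Real.pi_pos])
  have hcosφ : 0 < Real.cos φ :=
    Real.cos_pos_of_mem_Ioo ⟨by linarith [Real.pi_pos], hφlt⟩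
  have hcos1 : Real.cos φ ≤ 1 := Real.cos_le_one φ
  -- coefficients
  set a : Fin (d - m) → ℝ := fun i => (inner ℝ n (v i) : ℝ) with ha
  set b : Fin (d - m) → ℝ := fun i => (inner ℝ n (w i) : ℝ) with hb
  set cc : Fin (d - m) → ℝ := fun i => (inner ℝ n (w i - v i) : ℝ) with hcc
  set M : Fin (d - m) → Fin (d - m) → ℝ := fun i j => (inner ℝ (v i) (w j - v j) : ℝ) with hM
  set bad : Finset (Fin (d - m)) :=
    Finset.univ.filter (fun i : Fin (d - m) => d - 2 * m ≤ (i : ℕ)) with hbad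
  have hbc : ∀ i, b i = a i + cc i := by
    intro i; simp only [ha, hb, hcc, inner_sub_right]; ring
  have hcgood : ∀ i : Fin (d - m), (i : ℕ) < d - 2 * m → cc i = 0 := by
    intro i hi; simp only [hcc, hvw i hi, sub_self, inner_zero_right]
  have habs : ∀ i, |a i| ≤ 1 := by
    intro i
    calc |a i| ≤ ‖n‖ * ‖v i‖ := abs_real_inner_le_norm n (v i)
      _ = 1 := by rw [hn, hvon.1 i, mul_one]
  have hbabs : ∀ i, |b i| ≤ 1 := by
    intro i
    calc |b i| ≤ ‖n‖ * ‖w i‖ := abs_real_inner_le_norm n (w i)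
      _ = 1 := by rw [hn, hwon.1 i, mul_one]
  have hM0j : ∀ i j : Fin (d - m), (j : ℕ) < d - 2 * m → M i j = 0 := by
    intro i j hj; simp only [hM, hvw j hj, sub_self, inner_zero_right]
  have hM0i : ∀ i j : Fin (d - m), (i : ℕ) < d - 2 * m → M i j = 0 := by
    intro i j hi
    rcases Nat.lt_or_ge (j : ℕ) (d - 2 * m) with hj | hj
    · exact hM0j i j hj
    · have hne : i ≠ j := by
        intro h; rw [h] at hi; omega
      simp only [hM, inner_sub_right]
      rw [hvw i hi, hwon.2 hne, ← hvw i hi, hvon.2 hne, sub_zero]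
  have hMb : ∀ i j, |M i j| ≤ φ ^ 2 / 2 :=
    fun i j => aux_M φ hφ0 hφπ (v i) (v j) (w j) (hvon.1 i) (hvon.1 j) (hwon.1 j)
      (hang j) (hang2 i j)
  -- cardinality of bad
  have hbadcard : (bad.card : ℝ) ≤ (m : ℝ) := by
    have h1 : bad.card ≤ (Finset.Ico (d - 2 * m) (d - m)).card := by
      refine Finset.card_le_card_of_injOn (fun i : Fin (d - m) => (i : ℕ)) ?_ ?_
      · intro i hi
        simp only [Finset.mem_coe, hbad, Finset.mem_filter, Finset.mem_univ, true_and] at hi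
        simp only [Finset.mem_coe, Finset.mem_Ico]
        exact ⟨hi, i.2⟩
      · intro i _ j _ h; exact Fin.ext h
    rw [Nat.card_Ico] at h1
    have : bad.card ≤ m := by omega
    exact_mod_cast this
  -- projections
  have hS := aux_proj E₁ v hvon hvE n
  have hT := aux_proj E₂ w hwon hwE n
  set S : EuclideanSpace ℝ (Fin d) := ∑ i, a i • v i with hSdef
  set T : EuclideanSpace ℝ (Fin d) := ∑ i, b i • w i with hTdef
  have hS2 : ((E₁.orthogonalProjectionOnto n : E₁) : EuclideanSpace ℝ (Fin d)) = S := hS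
  have hT2' : ((E₂.orthogonalProjectionOnto n : E₂) : EuclideanSpace ℝ (Fin d)) = T := hT
  have ha1 : α₁ = ∑ i, a i ^ 2 := hα₁
  have hnS2 : ‖S‖ ^ 2 = α₁ := by
    have h : (inner ℝ S S : ℝ) = ∑ i, a i * a i := by
      simpa using hvon.inner_sum a a Finset.univ
    rw [← real_inner_self_eq_norm_sq, h, ha1]
    exact Finset.sum_congr rfl fun i _ => (pow_two (a i)).symm
  have hnT2 : ‖T‖ ^ 2 = ∑ i, b i ^ 2 := by
    have h : (inner ℝ T T : ℝ) = ∑ i, b i * b i := by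
      simpa using hwon.inner_sum b b Finset.univ
    rw [← real_inner_self_eq_norm_sq, h]
    exact Finset.sum_congr rfl fun i _ => (pow_two (b i)).symm
  have ha2 : α₂ = ∑ i, cc i ^ 2 := by
    rw [hα₂]
    calc ∑ i ∈ bad, (inner ℝ (w i - v i) n : ℝ) ^ 2
        = ∑ i ∈ bad, cc i ^ 2 :=
          Finset.sum_congr rfl fun i _ => by rw [real_inner_comm]
      _ = ∑ i, cc i ^ 2 := by
          apply Finset.sum_subset (Finset.subset_univ _)
          intro i _ hi
          have hlt : (i : ℕ) < d - 2 * m := by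
            simp only [hbad, Finset.mem_filter, Finset.mem_univ, true_and, not_le] at hi
            exact hi
          rw [hcgood i hlt]; ring
  set sAC : ℝ := ∑ i, a i * cc i with hsAC
  have hT2 : ‖T‖ ^ 2 = α₁ + 2 * sAC + α₂ := by
    rw [hnT2, ha1, ha2, hsAC]
    rw [Finset.mul_sum, ← Finset.sum_add_distrib, ← Finset.sum_add_distrib]
    exact Finset.sum_congr rfl fun i _ => by rw [hbc]; ring
  set R : ℝ := ∑ j, b j * (∑ i, a i * M i j) with hRdef
  have hST : (inner ℝ S T : ℝ) = α₁ + sAC + R := by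
    have hterm : ∀ j, (inner ℝ S (b j • w j) : ℝ)
        = b j * a j + b j * (∑ i, a i * M i j) := by
      intro j
      rw [real_inner_smul_right]
      have hw : w j = v j + (w j - v j) := by abel
      have hsplit : (inner ℝ S (w j) : ℝ) = a j + ∑ i, a i * M i j := by
        conv_lhs => rw [hw]
        rw [inner_add_right]
        congr 1
        · simpa using hvon.inner_left_fintype a j
        · rw [hSdef, sum_inner]
          exact Finset.sum_congr rfl fun i _ => real_inner_smul_left _ _ _
      rw [hsplit]; ring
    calc (inner ℝ S T : ℝ) = ∑ j, (inner ℝ S (b j • w j) : ℝ) := by rw [hTdef, inner_sum]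
      _ = ∑ j, (b j * a j + b j * (∑ i, a i * M i j)) :=
          Finset.sum_congr rfl fun j _ => hterm j
      _ = (∑ j, b j * a j) + R := by rw [Finset.sum_add_distrib, hRdef]
      _ = α₁ + sAC + R := by
          congr 1
          rw [ha1, hsAC, ← Finset.sum_add_distrib]
          exact Finset.sum_congr rfl fun j _ => by rw [hbc]; ring
  have hRbound : |R| ≤ (m : ℝ) ^ 2 * φ ^ 2 / 2 := by
    have h2 : ∀ j, (∑ i, a i * M i j) = ∑ i ∈ bad, a i * M i j := by
      intro j; symm
      apply Finset.sum_subset (Finset.subset_univ bad)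
      intro i _ hi
      have hlt : (i : ℕ) < d - 2 * m := by
        simp only [hbad, Finset.mem_filter, Finset.mem_univ, true_and, not_le] at hi
        exact hi
      rw [hM0i i j hlt]; ring
    have h1 : R = ∑ j ∈ bad, b j * (∑ i ∈ bad, a i * M i j) := by
      rw [hRdef]
      rw [show (∑ j, b j * (∑ i, a i * M i j))
          = ∑ j, b j * (∑ i ∈ bad, a i * M i j) from
        Finset.sum_congr rfl fun j _ => by rw [h2 j]]
      symm
      apply Finset.sum_subset (Finset.subset_univ bad)
      intro j _ hj
      have hlt : (j : ℕ) < d - 2 * m := by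
        simp only [hbad, Finset.mem_filter, Finset.mem_univ, true_and, not_le] at hj
        exact hj
      have hz : ∀ i, a i * M i j = 0 := fun i => by rw [hM0j i j hlt]; ring
      rw [Finset.sum_congr rfl fun i (_ : i ∈ bad) => hz i]
      simp
    rw [h1]
    have hinner_b : ∀ j ∈ bad, |b j * (∑ i ∈ bad, a i * M i j)| ≤ (m : ℝ) * (φ ^ 2 / 2) := by
      intro j _
      rw [abs_mul]
      have hX : |∑ i ∈ bad, a i * M i j| ≤ (bad.card : ℝ) * (φ ^ 2 / 2) := by
        calc |∑ i ∈ bad, a i * M i j| ≤ ∑ i ∈ bad, |a i * M i j| :=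
              Finset.abs_sum_le_sum_abs _ _
          _ ≤ ∑ _i ∈ bad, φ ^ 2 / 2 := by
              apply Finset.sum_le_sum
              intro i _
              rw [abs_mul]
              calc |a i| * |M i j| ≤ 1 * (φ ^ 2 / 2) :=
                    mul_le_mul (habs i) (hMb i j) (abs_nonneg _) zero_le_one
                _ = φ ^ 2 / 2 := one_mul _
          _ = (bad.card : ℝ) * (φ ^ 2 / 2) := by rw [Finset.sum_const, nsmul_eq_mul]
      calc |b j| * |∑ i ∈ bad, a i * M i j| ≤ 1 * ((bad.card : ℝ) * (φ ^ 2 / 2)) :=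
            mul_le_mul (hbabs j) hX (abs_nonneg _) zero_le_one
        _ = (bad.card : ℝ) * (φ ^ 2 / 2) := one_mul _
        _ ≤ (m : ℝ) * (φ ^ 2 / 2) := by
            apply mul_le_mul_of_nonneg_right hbadcard (by positivity)
    calc |∑ j ∈ bad, b j * (∑ i ∈ bad, a i * M i j)|
        ≤ ∑ j ∈ bad, |b j * (∑ i ∈ bad, a i * M i j)| := Finset.abs_sum_le_sum_abs _ _
      _ ≤ ∑ _j ∈ bad, (m : ℝ) * (φ ^ 2 / 2) := Finset.sum_le_sum hinner_b
      _ = (bad.card : ℝ) * ((m : ℝ) * (φ ^ 2 / 2)) := by rw [Finset.sum_const, nsmul_eq_mul]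
      _ ≤ (m : ℝ) * ((m : ℝ) * (φ ^ 2 / 2)) := by
          apply mul_le_mul_of_nonneg_right hbadcard (by positivity)
      _ = (m : ℝ) ^ 2 * φ ^ 2 / 2 := by ring
  have hα₂0 : 0 ≤ α₂ := by rw [ha2]; positivity
  have hTpos : 0 < ‖T‖ := by
    rcases (norm_nonneg T).lt_or_eq with h | h
    · exact h
    · exfalso
      have hsum : ∑ i, b i ^ 2 = 0 := by rw [← hnT2, ← h]; ring
      have hb0 : ∀ i, b i = 0 := by
        intro i
        have h0 := (Finset.sum_eq_zero_iff_of_nonneg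
          (fun i _ => sq_nonneg (b i))).1 hsum i (Finset.mem_univ i)
        exact pow_eq_zero_iff (two_ne_zero) |>.1 h0
      have heq : α₁ = α₂ := by
        rw [ha1, ha2]
        refine Finset.sum_congr rfl fun i _ => ?_
        have h3 := hbc i
        rw [hb0 i] at h3
        have h4 : a i = -cc i := by linarith
        rw [h4]; ring
      have hq2 : 0 ≤ 2 * (m : ℝ) ^ 2 * φ ^ 2 / Real.cos φ := by positivity
      linarith
  have hnSval : ‖S‖ = Real.sqrt α₁ := by
    rw [← hnS2, Real.sqrt_sq (norm_nonneg S)]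
  have hq0 : 0 ≤ (m : ℝ) ^ 2 * φ ^ 2 := by positivity
  have hcond' : α₂ + 2 * ((m : ℝ) ^ 2 * φ ^ 2) / Real.cos φ < α₁ := by
    have e : 2 * (m : ℝ) ^ 2 * φ ^ 2 / Real.cos φ
        = 2 * ((m : ℝ) ^ 2 * φ ^ 2) / Real.cos φ := by ring
    linarith [e ▸ hcond]
  rw [hS2, hT2']
  rw [show (2 : ℝ) * (m : ℝ) ^ 2 * φ ^ 2 = 2 * ((m : ℝ) ^ 2 * φ ^ 2) from by ring]
  exact aux_main α₁ α₂ sAC R (Real.cos φ) ((m : ℝ) ^ 2 * φ ^ 2) ‖S‖ ‖T‖ (inner ℝ S T)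
    hq0 hcosφ hcos1 hα₂0 hcond' hST hRbound hT2 hTpos hnSval
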